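/- (Theorems 1 and 2: any set of variables selected by Forward-Backward Selection, or by Forward-Backward Selection with Early Dropping run to completion (FBED∞), is minimal.) Let (V_i)_{i ∈ ι} be a finite family of random variables on a standard Borel probability space and T a random variable. Let S₀ ⊆ ι satisfy the forward-phase termination condition: for every r ∈ ι \ S₀, T is conditionally independent of V_r given (V_j)_{j ∈ S₀}. Let S ⊆ S₀ be obtained from S₀ by a finite sequence of backward removals — each step removes one index s from the current set S_m such that T is conditionally independent of V_s given (V_j)_{j ∈ S_m \ {s}} — carried out until no index of the current set satisfies this condition. Then S is minimal with respect to T: (i) for every s ∈ S, T is NOT conditionally independent of V_s given (V_j)_{j ∈ S \ {s}}, and (ii) for every r ∈ ι \ S, T is conditionally independent of V_r given (V_j)_{j ∈ S}. -/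

import Mathlib

open ProbabilityTheory MeasureTheory

/-- The σ-algebra generated jointly by the variables `V j`, `j ∈ B`. -/
def famAlg {Ω ι : Type*} (V : ι → Ω → ℝ) (B : Set ι) : MeasurableSpace Ω :=
  ⨆ j ∈ B, MeasurableSpace.comap (V j) inferInstance

theorem famAlg_le {Ω ι : Type*} {mΩ : MeasurableSpace Ω} {V : ι → Ω → ℝ}
    (hV : ∀ i, Measurable (V i)) (B : Set ι) : famAlg V B ≤ mΩ :=
  iSup₂_le fun j _ => (hV j).comap_le

/-- `T ⫫ V i | (V_j)_{j ∈ B}`: the σ-algebra generated by `T` is conditionally independent of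
the σ-algebra generated by `V i` given the σ-algebra generated jointly by `(V_j)_{j ∈ B}`. -/
def CondIndepVarFam {Ω ι : Type*} {mΩ : MeasurableSpace Ω} [StandardBorelSpace Ω]
    (μ : Measure Ω) [IsFiniteMeasure μ] (T : Ω → ℝ) (V : ι → Ω → ℝ)
    (hV : ∀ i, Measurable (V i)) (i : ι) (B : Set ι) : Prop :=
  CondIndep (famAlg V B) (MeasurableSpace.comap T inferInstance)
    (MeasurableSpace.comap (V i) inferInstance) (famAlg_le hV B) μ

/-- A set `S` of indices is minimal with respect to `T`: no selected variable can be removed,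
and no remaining variable can be added. -/
def MinimalVarSet {Ω ι : Type*} {mΩ : MeasurableSpace Ω} [StandardBorelSpace Ω]
    (μ : Measure Ω) [IsFiniteMeasure μ] (T : Ω → ℝ) (V : ι → Ω → ℝ)
    (hV : ∀ i, Measurable (V i)) (S : Set ι) : Prop :=
  (∀ s ∈ S, ¬ CondIndepVarFam μ T V hV s (S \ {s})) ∧
  (∀ r ∈ Set.univ \ S, CondIndepVarFam μ T V hV r S)

/-!
Each backward removal preserves the forward-phase termination condition. Indeed, if
`T ⫫ V_r | S` for every `r ∉ S` and the removed index `s` satisfies `T ⫫ V_s | S \ {s}`, then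
contraction gives `T ⫫ V_r | S \ {s}` for every `r ∉ S \ {s}`. Hence the final set satisfies
condition (ii), and condition (i) is exactly the stopping rule of the backward phase.

Contraction, `T ⫫ Y | Z` and `T ⫫ X | (Z, Y)` imply `T ⫫ X | Z`, is proved through the
characterisation `T ⫫ X | Z ↔ P[A | Z, X] = P[A | Z]` a.s. for every event `A` of `T`: the two
hypotheses give `P[A | Z, Y, X] = P[A | Z, Y] = P[A | Z]`, and conditioning on `(Z, X)` yields
`P[A | Z, X] = P[A | Z]`.
-/

open MeasurableSpace

lemma Set.indicator_one_mul_eq_indicator {α M₀ : Type*} [MulZeroOneClass M₀] (s : Set α)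
    (g : α → M₀) : (s.indicator fun _ => (1 : M₀)) * g = s.indicator g := by
  ext x
  by_cases hx : x ∈ s <;> simp [hx]

section PiSystem

variable {Ω : Type*} (m₁ m₂ : MeasurableSpace Ω)

lemma isPiSystem_image2_inter_measurableSet :
    IsPiSystem (Set.image2 (· ∩ ·) {s | MeasurableSet[m₁] s} {s | MeasurableSet[m₂] s}) := by
  rintro _ ⟨a, ha, b, hb, rfl⟩ _ ⟨c, hc, d, hd, rfl⟩ -
  exact ⟨a ∩ c, ha.inter hc, b ∩ d, hb.inter hd, Set.inter_inter_inter_comm a c b d⟩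

lemma generateFrom_image2_inter_measurableSet :
    generateFrom (Set.image2 (· ∩ ·) {s | MeasurableSet[m₁] s} {s | MeasurableSet[m₂] s}) =
      m₁ ⊔ m₂ := by
  refine le_antisymm (generateFrom_le ?_) (sup_le ?_ ?_)
  · rintro _ ⟨a, ha, b, hb, rfl⟩
    exact (le_sup_left (b := m₂) a ha).inter (le_sup_right (a := m₁) b hb)
  · exact fun s hs => measurableSet_generateFrom ⟨s, hs, Set.univ, .univ, Set.inter_univ s⟩
  · exact fun s hs => measurableSet_generateFrom ⟨Set.univ, .univ, s, hs, Set.univ_inter s⟩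

end PiSystem

section CondExp

variable {Ω : Type*} {mΩ : MeasurableSpace Ω} {μ : Measure Ω}

lemma setIntegral_eq_of_isPiSystem {m : MeasurableSpace Ω} (hm : m ≤ mΩ)
    {C : Set (Set Ω)} (h_gen : m = generateFrom C) (hC : IsPiSystem C) {f g : Ω → ℝ}
    (hf : Integrable f μ) (hg : Integrable g μ) (h_univ : ∫ x, f x ∂μ = ∫ x, g x ∂μ)
    (h_basic : ∀ s ∈ C, ∫ x in s, f x ∂μ = ∫ x in s, g x ∂μ)
    {s : Set Ω} (hs : MeasurableSet[m] s) : ∫ x in s, f x ∂μ = ∫ x in s, g x ∂μ := by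
  induction s, hs using MeasurableSpace.induction_on_inter h_gen hC with
  | empty => simp
  | basic s hs => exact h_basic s hs
  | compl s hs ih =>
    have hf' := integral_add_compl (hm s hs) hf
    have hg' := integral_add_compl (hm s hs) hg
    linarith
  | iUnion F hF_disj hF ih =>
    exact (hasSum_integral_iUnion (fun i => hm _ (hF i)) hF_disj hf.integrableOn).unique
      (by simpa only [ih] using
        hasSum_integral_iUnion (fun i => hm _ (hF i)) hF_disj hg.integrableOn)

lemma ae_norm_indicator_one_le_one (t : Set Ω) :
    ∀ᵐ x ∂μ, ‖t.indicator (fun _ => (1 : ℝ)) x‖ ≤ 1 :=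
  ae_of_all _ fun _ => (norm_indicator_le_norm_self _ _).trans norm_one.le

lemma ae_norm_condExp_indicator_le_one (m : MeasurableSpace Ω) (t : Set Ω) :
    ∀ᵐ x ∂μ, ‖(μ⟦t | m⟧) x‖ ≤ 1 := by
  refine ae_bdd_abs_condExp_of_ae_bdd_abs (R := (1 : ℝ)) (ae_of_all _ fun x => ?_)
  by_cases hx : x ∈ t <;> simp [hx]

end CondExp

namespace ProbabilityTheory

variable {Ω : Type*} {m' m₁ m₂ mΩ : MeasurableSpace Ω} [StandardBorelSpace Ω]
  {μ : Measure Ω} [IsFiniteMeasure μ]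

lemma CondIndep.setIntegral_inter_condExp_indicator (hm' : m' ≤ mΩ) (hm₁ : m₁ ≤ mΩ)
    (hm₂ : m₂ ≤ mΩ) (h : CondIndep m' m₁ m₂ hm' μ) {t a b : Set Ω} (ht : MeasurableSet[m₁] t)
    (ha : MeasurableSet[m'] a) (hb : MeasurableSet[m₂] b) :
    ∫ x in a ∩ b, (μ⟦t | m'⟧) x ∂μ = ∫ x in a ∩ b, t.indicator (fun _ => (1 : ℝ)) x ∂μ := by
  have hb' : MeasurableSet b := hm₂ b hb
  have h_int : Integrable (b.indicator (μ⟦t | m'⟧)) μ := integrable_condExp.indicator hb'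
  have h_pull : μ[b.indicator (μ⟦t | m'⟧) | m'] =ᵐ[μ] μ⟦t | m'⟧ * μ⟦b | m'⟧ := by
    rw [← Set.indicator_one_mul_eq_indicator, mul_comm]
    exact condExp_stronglyMeasurable_mul_of_bound hm' stronglyMeasurable_condExp
      ((integrable_const 1).indicator hb') 1 (ae_norm_condExp_indicator_le_one m' t)
  have h_prod : μ⟦t ∩ b | m'⟧ =ᵐ[μ] μ⟦t | m'⟧ * μ⟦b | m'⟧ :=
    (condIndep_iff m' m₁ m₂ hm' hm₁ hm₂ μ).mp h t b ht hb
  calc ∫ x in a ∩ b, (μ⟦t | m'⟧) x ∂μ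
      = ∫ x in a, b.indicator (μ⟦t | m'⟧) x ∂μ := (setIntegral_indicator hb').symm
    _ = ∫ x in a, (μ[b.indicator (μ⟦t | m'⟧) | m']) x ∂μ :=
        (setIntegral_condExp hm' h_int ha).symm
    _ = ∫ x in a, (μ⟦t ∩ b | m'⟧) x ∂μ := by
        refine setIntegral_congr_ae (hm' a ha) ?_
        filter_upwards [h_pull, h_prod] with x h₁ h₂ _ using h₁.trans h₂.symm
    _ = ∫ x in a, (t ∩ b).indicator (fun _ => (1 : ℝ)) x ∂μ :=
        setIntegral_condExp hm' ((integrable_const 1).indicator ((hm₁ t ht).inter hb')) ha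
    _ = ∫ x in a ∩ b, t.indicator (fun _ => (1 : ℝ)) x ∂μ := by
        rw [Set.inter_comm t b, ← Set.indicator_indicator, setIntegral_indicator hb']

lemma CondIndep.condExp_indicator_sup_ae_eq (hm' : m' ≤ mΩ) (hm₁ : m₁ ≤ mΩ) (hm₂ : m₂ ≤ mΩ)
    (h : CondIndep m' m₁ m₂ hm' μ) {t : Set Ω} (ht : MeasurableSet[m₁] t) :
    μ⟦t | m' ⊔ m₂⟧ =ᵐ[μ] μ⟦t | m'⟧ := by
  have h_ind : Integrable (t.indicator fun _ => (1 : ℝ)) μ :=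
    (integrable_const 1).indicator (hm₁ t ht)
  have h_meas : StronglyMeasurable[m' ⊔ m₂] (μ⟦t | m'⟧) :=
    stronglyMeasurable_condExp.mono le_sup_left
  refine (ae_eq_condExp_of_forall_setIntegral_eq (sup_le hm' hm₂) h_ind
    (fun s _ _ => integrable_condExp.integrableOn) (fun s hs _ => ?_)
    h_meas.aestronglyMeasurable).symm
  refine setIntegral_eq_of_isPiSystem (sup_le hm' hm₂)
    (generateFrom_image2_inter_measurableSet m' m₂).symm
    (isPiSystem_image2_inter_measurableSet m' m₂) integrable_condExp h_ind
    (integral_condExp hm') ?_ hs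
  rintro _ ⟨a, ha, b, hb, rfl⟩
  exact h.setIntegral_inter_condExp_indicator hm' hm₁ hm₂ ht ha hb

lemma condIndep_of_condExp_indicator_sup_ae_eq (hm' : m' ≤ mΩ) (hm₁ : m₁ ≤ mΩ)
    (hm₂ : m₂ ≤ mΩ) (h : ∀ t, MeasurableSet[m₁] t → μ⟦t | m' ⊔ m₂⟧ =ᵐ[μ] μ⟦t | m'⟧) :
    CondIndep m' m₁ m₂ hm' μ := by
  refine (condIndep_iff m' m₁ m₂ hm' hm₁ hm₂ μ).mpr fun t₁ t₂ ht₁ ht₂ => ?_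
  have ht₁' : MeasurableSet t₁ := hm₁ t₁ ht₁
  have ht₂' : MeasurableSet t₂ := hm₂ t₂ ht₂
  have hsup : m' ⊔ m₂ ≤ mΩ := sup_le hm' hm₂
  set e : Ω → ℝ := t₂.indicator fun _ => 1
  have he : StronglyMeasurable[m' ⊔ m₂] e :=
    (stronglyMeasurable_const.indicator ht₂).mono le_sup_right
  calc μ⟦t₁ ∩ t₂ | m'⟧
      = μ[e * t₁.indicator (fun _ => (1 : ℝ)) | m'] := by
        rw [Set.inter_comm]; exact congrArg _ Set.inter_indicator_one
    _ =ᵐ[μ] μ[μ[e * t₁.indicator (fun _ => (1 : ℝ)) | m' ⊔ m₂] | m'] :=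
        (condExp_condExp_of_le le_sup_left hsup).symm
    _ =ᵐ[μ] μ[e * μ⟦t₁ | m'⟧ | m'] := by
        refine condExp_congr_ae ?_
        refine (condExp_stronglyMeasurable_mul_of_bound hsup he
          ((integrable_const 1).indicator ht₁') 1 (ae_norm_indicator_one_le_one t₂)).trans ?_
        exact Filter.EventuallyEq.rfl.mul (h t₁ ht₁)
    _ =ᵐ[μ] μ⟦t₁ | m'⟧ * μ⟦t₂ | m'⟧ := by
        rw [mul_comm]
        exact condExp_stronglyMeasurable_mul_of_bound hm' stronglyMeasurable_condExp
          ((integrable_const 1).indicator ht₂') 1 (ae_norm_condExp_indicator_le_one m' t₁)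

theorem CondIndep.of_cond_eq {m'' : MeasurableSpace Ω} {hm' : m' ≤ mΩ}
    (h : CondIndep m' m₁ m₂ hm' μ) (he : m' = m'') : CondIndep m'' m₁ m₂ (he ▸ hm') μ := by
  subst he
  exact h

theorem condIndep_iff_condExp_indicator_sup_ae_eq (hm' : m' ≤ mΩ) (hm₁ : m₁ ≤ mΩ)
    (hm₂ : m₂ ≤ mΩ) :
    CondIndep m' m₁ m₂ hm' μ ↔
      ∀ t, MeasurableSet[m₁] t → μ⟦t | m' ⊔ m₂⟧ =ᵐ[μ] μ⟦t | m'⟧ :=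
  ⟨fun h _ ht => h.condExp_indicator_sup_ae_eq hm' hm₁ hm₂ ht,
    condIndep_of_condExp_indicator_sup_ae_eq hm' hm₁ hm₂⟩

theorem CondIndep.of_condIndep_sup {mT mX mY mZ : MeasurableSpace Ω} (hT : mT ≤ mΩ)
    (hX : mX ≤ mΩ) (hY : mY ≤ mΩ) {hZ : mZ ≤ mΩ} {hZY : mZ ⊔ mY ≤ mΩ}
    (h₁ : CondIndep mZ mT mY hZ μ) (h₂ : CondIndep (mZ ⊔ mY) mT mX hZY μ) :
    CondIndep mZ mT mX hZ μ := by
  refine (condIndep_iff_condExp_indicator_sup_ae_eq hZ hT hX).mpr fun t ht => ?_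
  have h_le : mZ ⊔ mX ≤ mZ ⊔ mY ⊔ mX := sup_le_sup_right le_sup_left mX
  calc μ⟦t | mZ ⊔ mX⟧
      =ᵐ[μ] μ[μ⟦t | mZ ⊔ mY ⊔ mX⟧ | mZ ⊔ mX] :=
        (condExp_condExp_of_le h_le (sup_le hZY hX)).symm
    _ =ᵐ[μ] μ[μ⟦t | mZ⟧ | mZ ⊔ mX] :=
        condExp_congr_ae ((h₂.condExp_indicator_sup_ae_eq hZY hT hX ht).trans
          (h₁.condExp_indicator_sup_ae_eq hZ hT hY ht))
    _ = μ⟦t | mZ⟧ :=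
        condExp_of_stronglyMeasurable (sup_le hZ hX)
          (stronglyMeasurable_condExp.mono le_sup_left) integrable_condExp

end ProbabilityTheory

lemma famAlg_eq_diff_singleton_sup {Ω ι : Type*} (V : ι → Ω → ℝ) {B : Set ι} {s : ι}
    (hs : s ∈ B) :
    famAlg V B = famAlg V (B \ {s}) ⊔ MeasurableSpace.comap (V s) inferInstance := by
  conv_lhs => rw [← Set.insert_sdiff_self_of_mem hs]
  rw [famAlg, iSup_insert, sup_comm]
  rfl

section Selection

variable {Ω ι : Type*} {mΩ : MeasurableSpace Ω} [StandardBorelSpace Ω] {μ : Measure Ω}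
  [IsFiniteMeasure μ] {T : Ω → ℝ} {V : ι → Ω → ℝ} {hV : ∀ i, Measurable (V i)}

lemma CondIndepVarFam.diff_singleton (hT : Measurable T) {S : Set ι} {r s : ι}
    (h : CondIndepVarFam μ T V hV r S) (hs : s ∈ S)
    (h_removed : CondIndepVarFam μ T V hV s (S \ {s})) :
    CondIndepVarFam μ T V hV r (S \ {s}) :=
  h_removed.of_condIndep_sup hT.comap_le (hV r).comap_le (hV s).comap_le
    (CondIndep.of_cond_eq h (famAlg_eq_diff_singleton_sup V hs))

lemma condIndepVarFam_outside_diff_singleton (hT : Measurable T) {S : Set ι} {s : ι}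
    (hs : s ∈ S) (h_removed : CondIndepVarFam μ T V hV s (S \ {s}))
    (h : ∀ r ∈ Set.univ \ S, CondIndepVarFam μ T V hV r S) :
    ∀ r ∈ Set.univ \ (S \ {s}), CondIndepVarFam μ T V hV r (S \ {s}) := by
  rintro r ⟨-, hr⟩
  by_cases hrs : r = s
  · exact hrs ▸ h_removed
  · exact (h r ⟨trivial, fun hrS => hr ⟨hrS, hrs⟩⟩).diff_singleton hT hs h_removed

end Selection

theorem fbs_selected_set_minimal_general {Ω ι : Type*} {mΩ : MeasurableSpace Ω}
    [StandardBorelSpace Ω] (μ : Measure Ω) [IsProbabilityMeasure μ]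
    (T : Ω → ℝ) (V : ι → Ω → ℝ) (hT : Measurable T) (hV : ∀ i, Measurable (V i))
    (k : ℕ) (S : ℕ → Set ι) (s : ℕ → ι)
    (h0 : ∀ r ∈ Set.univ \ S 0, CondIndepVarFam μ T V hV r (S 0))
    (hmem : ∀ m < k, s m ∈ S m)
    (hstep : ∀ m < k, S (m + 1) = S m \ {s m})
    (hind : ∀ m < k, CondIndepVarFam μ T V hV (s m) (S m \ {s m}))
    (hstop : ∀ t ∈ S k, ¬ CondIndepVarFam μ T V hV t (S k \ {t})) :
    MinimalVarSet μ T V hV (S k) := by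
  have h_outside : ∀ m ≤ k, ∀ r ∈ Set.univ \ S m, CondIndepVarFam μ T V hV r (S m) := by
    intro m hm
    induction m with
    | zero => exact h0
    | succ n ih =>
      rw [hstep n hm]
      exact condIndepVarFam_outside_diff_singleton hT (hmem n hm) (hind n hm)
        (ih (by omega))
  exact ⟨hstop, h_outside k le_rfl⟩

/-- Theorems 1 and 2: any set of variables selected by Forward-Backward Selection (or FBED∞),
i.e. obtained from a forward-phase-terminal set `S 0` by backward removals carried out until no
further removal is possible, is minimal with respect to `T`. -/
theorem fbs_selected_set_minimal {Ω ι : Type*} {mΩ : MeasurableSpace Ω}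
    [StandardBorelSpace Ω] [Fintype ι] (μ : Measure Ω) [IsProbabilityMeasure μ]
    (T : Ω → ℝ) (V : ι → Ω → ℝ) (hT : Measurable T) (hV : ∀ i, Measurable (V i))
    (k : ℕ) (S : ℕ → Set ι) (s : ℕ → ι)
    (h0 : ∀ r ∈ Set.univ \ S 0, CondIndepVarFam μ T V hV r (S 0))
    (hmem : ∀ m < k, s m ∈ S m)
    (hstep : ∀ m < k, S (m + 1) = S m \ {s m})
    (hind : ∀ m < k, CondIndepVarFam μ T V hV (s m) (S m \ {s m}))
    (hstop : ∀ t ∈ S k, ¬ CondIndepVarFam μ T V hV t (S k \ {t})) :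
    MinimalVarSet μ T V hV (S k) :=
  fbs_selected_set_minimal_general (mΩ := mΩ) μ T V hT hV k S s h0 hmem hstep hind hstop
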